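/- Let R be a semisimple ring and C = ⊕_{n,m∈ℕ} C_{n,m} a bigraded R-coring such that the associated graded coring gr(C), whose degree-n component is ⊕_{m∈ℕ} C_{n,m}, is strongly graded, and such that C_{n,m} = 0 whenever n ∈ {0,1} and m ≠ n. Then C_{n,m} = 0 for all n ≥ 2 and all m ≠ n. -/

import Mathlib

noncomputable section
open MulOpposite
open scoped DirectSum

namespace P1605

--CHUNK_T_BEGIN

section TensorR

variable (R : Type) [Ring R]
variable (M N : Type) [AddCommGroup M] [AddCommGroup N] [Module Rᵐᵒᵖ M] [Module R N]

/-- The subgroup of the `ℤ`-tensor product by which one quotients to obtain the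
balanced tensor product `M ⊗_R N` of a right `R`-module and a left `R`-module. -/
def trel : Submodule ℤ (TensorProduct ℤ M N) :=
  Submodule.span ℤ {x | ∃ (r : R) (m : M) (n : N),
    x = (op r • m) ⊗ₜ[ℤ] n - m ⊗ₜ[ℤ] (r • n)}

/-- The tensor product `M ⊗_R N` over a (possibly noncommutative) ring `R`,
of a right `R`-module `M` and a left `R`-module `N`. -/
def TensorR : Type := TensorProduct ℤ M N ⧸ trel R M N

instance : AddCommGroup (TensorR R M N) :=
  inferInstanceAs (AddCommGroup (TensorProduct ℤ M N ⧸ trel R M N))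

variable {R M N}

/-- The canonical balanced biadditive map `M × N → M ⊗_R N`, `(m, n) ↦ m ⊗ n`. -/
def tp (m : M) (n : N) : TensorR R M N := Submodule.Quotient.mk (m ⊗ₜ[ℤ] n)

theorem tp_add_left (m m' : M) (n : N) :
    tp (R := R) (m + m') n = tp m n + tp m' n := by
  show Submodule.Quotient.mk _ = Submodule.Quotient.mk _ + Submodule.Quotient.mk _
  rw [TensorProduct.add_tmul]; exact Submodule.Quotient.mk_add _

theorem tp_add_right (m : M) (n n' : N) :
    tp (R := R) m (n + n') = tp m n + tp m n' := by
  show Submodule.Quotient.mk _ = Submodule.Quotient.mk _ + Submodule.Quotient.mk _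
  rw [TensorProduct.tmul_add]; exact Submodule.Quotient.mk_add _

@[simp] theorem tp_zero_left (n : N) : tp (R := R) (0 : M) n = 0 := by
  show Submodule.Quotient.mk _ = _
  rw [TensorProduct.zero_tmul]; exact Submodule.Quotient.mk_eq_zero _ |>.2 (zero_mem _)

@[simp] theorem tp_zero_right (m : M) : tp (R := R) m (0 : N) = 0 := by
  show Submodule.Quotient.mk _ = _
  rw [TensorProduct.tmul_zero]; exact Submodule.Quotient.mk_eq_zero _ |>.2 (zero_mem _)

/-- The balance relation `(m · r) ⊗ n = m ⊗ (r · n)`. -/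
theorem tp_balance (r : R) (m : M) (n : N) :
    tp (R := R) (op r • m) n = tp m (r • n) :=
  (Submodule.Quotient.eq _).2 (Submodule.subset_span ⟨r, m, n, rfl⟩)

theorem tp_neg_left (m : M) (n : N) : tp (R := R) (-m) n = - tp m n := by
  have := tp_add_left (R := R) m (-m) n
  rw [add_neg_cancel, tp_zero_left] at this
  exact eq_neg_of_add_eq_zero_right this.symm

end TensorR

section TensorR

variable {R : Type} [Ring R]
variable {M N : Type} [AddCommGroup M] [AddCommGroup N] [Module Rᵐᵒᵖ M] [Module R N]
variable {P : Type} [AddCommGroup P]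

/-- Universal property: a balanced biadditive map lifts to the tensor product. -/
def liftT (f : M →+ N →+ P)
    (hf : ∀ (r : R) (m : M) (n : N), f (op r • m) n = f m (r • n)) :
    TensorR R M N →+ P :=
  ((trel R M N).liftQ
    (TensorProduct.lift (LinearMap.mk₂ ℤ (fun m n => f m n)
      (fun m m' n => by simp)
      (fun z m n => by simp)
      (fun m n n' => by simp)
      (fun z m n => by simp)))
    (by
      rw [trel, Submodule.span_le]
      rintro x ⟨r, m, n, rfl⟩
      exact LinearMap.mem_ker.2 ((map_sub _ _ _).trans (sub_eq_zero.2 (hf r m n))))).toAddMonoidHom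

@[simp] theorem liftT_tp (f : M →+ N →+ P)
    (hf : ∀ (r : R) (m : M) (n : N), f (op r • m) n = f m (r • n)) (m : M) (n : N) :
    liftT f hf (tp m n) = f m n := rfl

theorem TensorR.ind {motive : TensorR R M N → Prop} (z : TensorR R M N)
    (h0 : motive 0) (htp : ∀ m n, motive (tp m n))
    (hadd : ∀ x y, motive x → motive y → motive (x + y)) : motive z := by
  obtain ⟨w, rfl⟩ := Submodule.Quotient.mk_surjective _ z
  induction w using TensorProduct.induction_on with
  | zero =>
      have : (Submodule.Quotient.mk (0 : TensorProduct ℤ M N) : TensorR R M N) = 0 :=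
        (Submodule.Quotient.mk_eq_zero _).2 (zero_mem _)
      rw [this]; exact h0
  | tmul m n => exact htp m n
  | add x y hx hy =>
      rw [Submodule.Quotient.mk_add]
      exact hadd _ _ hx hy

theorem TensorR.addHom_ext {f g : TensorR R M N →+ P}
    (h : ∀ m n, f (tp m n) = g (tp m n)) : f = g := by
  ext z
  induction z using TensorR.ind with
  | h0 => simp
  | htp m n => exact h m n
  | hadd x y hx hy => simp [hx, hy]

variable {M' N' : Type} [AddCommGroup M'] [AddCommGroup N'] [Module Rᵐᵒᵖ M'] [Module R N']

/-- Functoriality of the tensor product in both arguments, for equivariant additive maps. -/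
def mapT (f : M →+ M') (g : N →+ N')
    (hf : ∀ (r : R) (m : M), f (op r • m) = op r • f m)
    (hg : ∀ (r : R) (n : N), g (r • n) = r • g n) :
    TensorR R M N →+ TensorR R M' N' :=
  liftT (P := TensorR R M' N')
    (AddMonoidHom.mk' (fun m => AddMonoidHom.mk' (fun n => tp (R := R) (f m) (g n))
        (fun n n' => by (try dsimp only); rw [map_add, tp_add_right]))
      (fun m m' => by
        ext n
        show tp (R := R) (f (m + m')) (g n) = tp (f m) (g n) + tp (f m') (g n)
        rw [map_add, tp_add_left]))
    (fun r m n => by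
      show tp (f (op r • m)) (g n) = tp (f m) (g (r • n))
      rw [hf, hg]; exact tp_balance r (f m) (g n))

@[simp] theorem mapT_tp (f : M →+ M') (g : N →+ N')
    (hf : ∀ (r : R) (m : M), f (op r • m) = op r • f m)
    (hg : ∀ (r : R) (n : N), g (r • n) = r • g n) (m : M) (n : N) :
    mapT f g hf hg (tp m n) = tp (f m) (g n) := rfl

/-- A convenient unbundled version of the universal property. -/
def liftT₂ (f : M → N → P)
    (h1 : ∀ m m' n, f (m + m') n = f m n + f m' n)
    (h2 : ∀ m n n', f m (n + n') = f m n + f m n')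
    (hb : ∀ (r : R) m n, f (op r • m) n = f m (r • n)) : TensorR R M N →+ P :=
  liftT (AddMonoidHom.mk' (fun m => AddMonoidHom.mk' (f m) (h2 m))
    (fun m m' => AddMonoidHom.ext fun n => h1 m m' n)) hb

@[simp] theorem liftT₂_tp (f : M → N → P) (h1 : ∀ m m' n, f (m + m') n = f m n + f m' n)
    (h2 : ∀ m n n', f m (n + n') = f m n + f m n')
    (hb : ∀ (r : R) m n, f (op r • m) n = f m (r • n)) (m : M) (n : N) :
    liftT₂ f h1 h2 hb (tp m n) = f m n := rfl

end TensorR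

section Modules

variable {R : Type} [Ring R]
variable {M N : Type} [AddCommGroup M] [AddCommGroup N] [Module Rᵐᵒᵖ M] [Module R N]

section Left
variable [Module R M] [SMulCommClass R Rᵐᵒᵖ M]

/-- Left `R`-action on the tensor product, through the left factor. -/
def lsmT (r : R) : TensorR R M N →+ TensorR R M N :=
  mapT (DistribMulAction.toAddMonoidHom M r) (AddMonoidHom.id N)
    (fun s m => smul_comm r (op s) m) (fun _ _ => rfl)

instance instModLeftTensorR : Module R (TensorR R M N) where
  smul r z := lsmT r z
  one_smul z := by
    show lsmT 1 z = z
    induction z using TensorR.ind with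
    | h0 => simp
    | htp m n => show tp ((1:R) • m) n = tp m n; rw [one_smul]
    | hadd x y hx hy => rw [map_add, hx, hy]
  mul_smul r s z := by
    show lsmT (r * s) z = lsmT r (lsmT s z)
    induction z using TensorR.ind with
    | h0 => simp
    | htp m n => show tp ((r * s) • m) n = tp (r • s • m) n; rw [mul_smul]
    | hadd x y hx hy => simp only [map_add, hx, hy]
  smul_zero r := by show lsmT r 0 = 0; simp
  smul_add r x y := by show lsmT r (x + y) = lsmT r x + lsmT r y; simp
  add_smul r s z := by
    show lsmT (r + s) z = lsmT r z + lsmT s z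
    induction z using TensorR.ind with
    | h0 => simp
    | htp m n =>
        show tp ((r + s) • m) n = tp (r • m) n + tp (s • m) n
        rw [add_smul, tp_add_left]
    | hadd x y hx hy =>
        rw [map_add, hx, hy, map_add, map_add]; abel
  zero_smul z := by
    show lsmT 0 z = 0
    induction z using TensorR.ind with
    | h0 => simp
    | htp m n => show tp ((0:R) • m) n = 0; rw [zero_smul, tp_zero_left]
    | hadd x y hx hy => rw [map_add, hx, hy, add_zero]

@[simp] theorem lsm_tp (r : R) (m : M) (n : N) :
    r • (tp (R := R) m n : TensorR R M N) = tp (r • m) n := rfl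

end Left

section Right
variable [Module Rᵐᵒᵖ N] [SMulCommClass R Rᵐᵒᵖ N]

/-- Right `R`-action on the tensor product, through the right factor. -/
def rsmT (s : Rᵐᵒᵖ) : TensorR R M N →+ TensorR R M N :=
  mapT (AddMonoidHom.id M) (DistribMulAction.toAddMonoidHom N s)
    (fun _ _ => rfl) (fun r n => (smul_comm r s n).symm)

instance instModRightTensorR : Module Rᵐᵒᵖ (TensorR R M N) where
  smul s z := rsmT s z
  one_smul z := by
    show rsmT 1 z = z
    induction z using TensorR.ind with
    | h0 => simp
    | htp m n => show tp m ((1:Rᵐᵒᵖ) • n) = tp m n; rw [one_smul]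
    | hadd x y hx hy => rw [map_add, hx, hy]
  mul_smul r s z := by
    show rsmT (r * s) z = rsmT r (rsmT s z)
    induction z using TensorR.ind with
    | h0 => simp
    | htp m n => show tp m ((r * s) • n) = tp m (r • s • n); rw [mul_smul]
    | hadd x y hx hy => simp only [map_add, hx, hy]
  smul_zero r := by show rsmT r 0 = 0; simp
  smul_add r x y := by show rsmT r (x + y) = rsmT r x + rsmT r y; simp
  add_smul r s z := by
    show rsmT (r + s) z = rsmT r z + rsmT s z
    induction z using TensorR.ind with
    | h0 => simp
    | htp m n =>
        show tp m ((r + s) • n) = tp m (r • n) + tp m (s • n)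
        rw [add_smul, tp_add_right]
    | hadd x y hx hy => rw [map_add, hx, hy, map_add, map_add]; abel
  zero_smul z := by
    show rsmT 0 z = 0
    induction z using TensorR.ind with
    | h0 => simp
    | htp m n => show tp m ((0:Rᵐᵒᵖ) • n) = 0; rw [zero_smul, tp_zero_right]
    | hadd x y hx hy => rw [map_add, hx, hy, add_zero]

@[simp] theorem rsm_tp (s : Rᵐᵒᵖ) (m : M) (n : N) :
    s • (tp (R := R) m n : TensorR R M N) = tp m (s • n) := rfl

end Right

instance instSMulCommTensorR [Module R M] [SMulCommClass R Rᵐᵒᵖ M]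
    [Module Rᵐᵒᵖ N] [SMulCommClass R Rᵐᵒᵖ N] :
    SMulCommClass R Rᵐᵒᵖ (TensorR R M N) where
  smul_comm r s z := by
    induction z using TensorR.ind with
    | h0 => simp
    | htp m n => rw [rsm_tp, lsm_tp, lsm_tp, rsm_tp]
    | hadd x y hx hy => simp only [smul_add, hx, hy]

end Modules

section Assoc

variable {R : Type} [Ring R]
variable {M N P : Type} [AddCommGroup M] [AddCommGroup N] [AddCommGroup P]
variable [Module Rᵐᵒᵖ M]
variable [Module R N] [Module Rᵐᵒᵖ N] [SMulCommClass R Rᵐᵒᵖ N]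
variable [Module R P]

/-- The associator `(M ⊗_R N) ⊗_R P → M ⊗_R (N ⊗_R P)`. -/
def assocT : TensorR R (TensorR R M N) P →+ TensorR R M (TensorR R N P) :=
  liftT (P := TensorR R M (TensorR R N P))
    (liftT (P := P →+ TensorR R M (TensorR R N P))
      (AddMonoidHom.mk' (fun m => AddMonoidHom.mk'
          (fun n => AddMonoidHom.mk' (fun p => tp (R := R) m (tp (R := R) n p))
            (fun p p' => by (try dsimp only); rw [tp_add_right, tp_add_right]))
          (fun n n' => by
            ext p
            show tp (R := R) m (tp (R := R) (n + n') p) = tp m (tp n p) + tp m (tp n' p)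
            rw [tp_add_left, tp_add_right]))
        (fun m m' => by
          ext n p
          show tp (R := R) (m + m') (tp (R := R) n p)
              = tp m (tp n p) + tp m' (tp n p)
          rw [tp_add_left]))
      (fun r m n => by
        ext p
        show tp (R := R) (op r • m) (tp (R := R) n p) = tp m (tp (r • n) p)
        rw [tp_balance, lsm_tp]))
    (fun r x p => by
      induction x using TensorR.ind with
      | h0 => simp
      | htp m n =>
          rw [rsm_tp]
          show tp (R := R) m (tp (R := R) (op r • n) p) = tp m (tp n (r • p))
          rw [tp_balance]
      | hadd x y hx hy =>
          rw [smul_add, map_add, AddMonoidHom.add_apply]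
          conv_rhs => rw [map_add, AddMonoidHom.add_apply]
          exact congrArg₂ (· + ·) hx hy)

@[simp] theorem assocT_tp (m : M) (n : N) (p : P) :
    assocT (R := R) (tp (tp m n) p) = tp m (tp n p) := rfl

/-- The associator `M ⊗_R (N ⊗_R P) → (M ⊗_R N) ⊗_R P`. -/
def assocT' : TensorR R M (TensorR R N P) →+ TensorR R (TensorR R M N) P :=
  liftT (P := TensorR R (TensorR R M N) P)
    (AddMonoidHom.mk'
      (fun m => liftT (P := TensorR R (TensorR R M N) P)
        (AddMonoidHom.mk' (fun n => AddMonoidHom.mk'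
            (fun p => tp (R := R) (tp (R := R) m n) p)
            (fun p p' => by (try dsimp only); rw [tp_add_right]))
          (fun n n' => by
            ext p
            show tp (R := R) (tp (R := R) m (n + n')) p
                = tp (tp m n) p + tp (tp m n') p
            rw [tp_add_right, tp_add_left]))
        (fun r n p => by
          show tp (R := R) (tp (R := R) m (op r • n)) p = tp (tp m n) (r • p)
          rw [show tp (R := R) m (op r • n) = op r • tp (R := R) m n from
            (rsm_tp _ _ _).symm, tp_balance]))
      (fun m m' => by
        apply TensorR.addHom_ext (R := R)
        intro n p
        show tp (R := R) (tp (R := R) (m + m') n) p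
            = tp (tp m n) p + tp (tp m' n) p
        rw [tp_add_left, tp_add_left]))
    (fun r m w => by
      induction w using TensorR.ind with
      | h0 => simp
      | htp n p =>
          show tp (R := R) (tp (R := R) (op r • m) n) p
              = tp (R := R) (tp (R := R) m (r • n)) p
          rw [tp_balance (R := R) r m n]
      | hadd x y hx hy => rw [smul_add, map_add, hx, hy, map_add])

@[simp] theorem assocT'_tp (m : M) (n : N) (p : P) :
    assocT' (R := R) (tp m (tp n p)) = tp (tp m n) p := rfl

end Assoc

/-- Transport of an additive group along an equality of indices in a family. -/
def fcast {α : Sort*} (F : α → Type) [∀ x, AddCommGroup (F x)] {a b : α} (h : a = b) :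
    F a ≃+ F b := by subst h; exact AddEquiv.refl _

@[simp] theorem fcast_rfl {α : Sort*} (F : α → Type) [∀ x, AddCommGroup (F x)] (a : α)
    (x : F a) : fcast F (rfl : a = a) x = x := rfl

--CHUNK_T_END

--CHUNK_C_BEGIN
section Corings

variable {R : Type} [Ring R]

section Collapse

variable {M C0 : Type} [AddCommGroup M] [AddCommGroup C0]

/-- Collapsing `M ⊗_R C_0 → M` along an identification `ε : C_0 ≅ R`. -/
def rcollapse [Module Rᵐᵒᵖ M] [Module R C0] (e : C0 →+ R)
    (he : ∀ (r : R) (y : C0), e (r • y) = r * e y) : TensorR R M C0 →+ M :=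
  liftT₂ (fun m y => (op (e y) : Rᵐᵒᵖ) • m)
    (fun m m' y => smul_add _ m m')
    (fun m y y' => by (try dsimp only); rw [map_add, ← add_smul, op_add])
    (fun r m y => by
      try dsimp only
      rw [← mul_smul, he, ← op_mul])

/-- Collapsing `C_0 ⊗_R M → M` along an identification `ε : C_0 ≅ R`. -/
def lcollapse [Module R M] [Module Rᵐᵒᵖ C0] (e : C0 →+ R)
    (he : ∀ (s : Rᵐᵒᵖ) (y : C0), e (s • y) = e y * s.unop) : TensorR R C0 M →+ M :=
  liftT₂ (fun y m => e y • m)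
    (fun y y' m => by (try dsimp only); rw [map_add, ← add_smul])
    (fun y m m' => smul_add _ m m')
    (fun r y m => by
      try dsimp only
      rw [he, ← mul_smul, unop_op])

end Collapse

variable (R)

/-- A connected graded `R`-coring: a positively graded coalgebra in the monoidal
category of `R`-bimodules whose degree-zero component is `R` itself (via the
counit isomorphism `ε`). -/
structure ConnCoring where
  C : ℕ → Type
  [acg : ∀ n, AddCommGroup (C n)]
  [modL : ∀ n, Module R (C n)]
  [modR : ∀ n, Module Rᵐᵒᵖ (C n)]
  [scomm : ∀ n, SMulCommClass R Rᵐᵒᵖ (C n)]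
  Δ : ∀ p q, C (p + q) →+ TensorR R (C p) (C q)
  Δ_lsmul : ∀ (p q : ℕ) (r : R) (x : C (p + q)), Δ p q (r • x) = r • Δ p q x
  Δ_rsmul : ∀ (p q : ℕ) (s : Rᵐᵒᵖ) (x : C (p + q)), Δ p q (s • x) = s • Δ p q x
  ε : C 0 ≃+ R
  ε_lsmul : ∀ (r : R) (x : C 0), ε (r • x) = r * ε x
  ε_rsmul : ∀ (s : Rᵐᵒᵖ) (x : C 0), ε (s • x) = ε x * s.unop
  counit_right : ∀ (n : ℕ) (x : C (n + 0)),
    rcollapse ε.toAddMonoidHom ε_lsmul (Δ n 0 x) = x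
  counit_left : ∀ (n : ℕ) (x : C (0 + n)),
    lcollapse ε.toAddMonoidHom ε_rsmul (Δ 0 n x) = fcast C (Nat.zero_add n) x
  grouplike : Δ 0 0 (ε.symm 1) = tp (ε.symm 1) (ε.symm 1)
  coassoc : ∀ (p q r : ℕ) (x : C (p + q + r)),
    assocT (mapT (Δ p q) (AddMonoidHom.id (C r))
        (fun s y => Δ_rsmul p q (op s) y) (fun _ _ => rfl)
      (Δ (p + q) r x))
    = mapT (AddMonoidHom.id (C p)) (Δ q r) (fun _ _ => rfl)
        (fun s y => Δ_lsmul q r s y)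
      (Δ p (q + r) (fcast C (Nat.add_assoc p q r) x))

attribute [instance] ConnCoring.acg ConnCoring.modL ConnCoring.modR ConnCoring.scomm

variable {R}

/-- A connected coring is strongly graded when all components of the
comultiplication are injective. -/
def ConnCoring.StronglyGraded (C : ConnCoring R) : Prop :=
  ∀ p q, Function.Injective (C.Δ p q)

/-- The element `1 ∈ R = C_0` of a connected coring. -/
def ConnCoring.one (C : ConnCoring R) : C.C 0 := C.ε.symm 1

/-- An element `x = ∑ₖ xₖ` of a connected coring (given by its homogeneous
components) is primitive if `Δ x = x ⊗ 1 + 1 ⊗ x`, written out componentwise. -/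
def ConnCoring.IsPrimitive (C : ConnCoring R) (x : ⨁ n, C.C n) : Prop :=
  (C.Δ 0 0 (x 0) = tp (x 0) C.one + tp C.one (x 0)) ∧
  (∀ k : ℕ, 0 < k → C.Δ k 0 (x (k + 0)) = tp (x k) C.one) ∧
  (∀ k : ℕ, 0 < k → C.Δ 0 k (x (0 + k)) = tp C.one (x k)) ∧
  (∀ p q : ℕ, 0 < p → 0 < q → C.Δ p q (x (p + q)) = 0)

/-- A morphism of connected graded `R`-corings. -/
structure CoringMor (C D : ConnCoring R) where
  f : ∀ n, C.C n →+ D.C n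
  f_lsmul : ∀ (n : ℕ) (r : R) (x : C.C n), f n (r • x) = r • f n x
  f_rsmul : ∀ (n : ℕ) (s : Rᵐᵒᵖ) (x : C.C n), f n (s • x) = s • f n x
  f_counit : ∀ x : C.C 0, D.ε (f 0 x) = C.ε x
  f_comul : ∀ (p q : ℕ) (x : C.C (p + q)),
    D.Δ p q (f (p + q) x)
      = mapT (f p) (f q) (fun s y => f_rsmul p (op s) y) (fun s y => f_lsmul q s y)
          (C.Δ p q x)

end Corings
--CHUNK_C_END

--CHUNK_BC_BEGIN
section BigradedCorings

variable (R : Type) [Ring R]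

/-- A connected bigraded `R`-coring: an `R`-coring with a bigrading
`C = ⊕ C_{n,m}` such that the comultiplication restricts to maps
`C_{n+n', m+m'} → C_{n,m} ⊗_R C_{n',m'}`, `C_{0,0} = R` (via `ε`) and
`C_{0,m} = 0` for `m > 0`. -/
structure BigrCoring where
  C : ℕ → ℕ → Type
  [acg : ∀ n m, AddCommGroup (C n m)]
  [modL : ∀ n m, Module R (C n m)]
  [modR : ∀ n m, Module Rᵐᵒᵖ (C n m)]
  [scomm : ∀ n m, SMulCommClass R Rᵐᵒᵖ (C n m)]
  Δ : ∀ n m n' m', C (n + n') (m + m') →+ TensorR R (C n m) (C n' m')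
  Δ_lsmul : ∀ (n m n' m' : ℕ) (r : R) (x : C (n + n') (m + m')),
    Δ n m n' m' (r • x) = r • Δ n m n' m' x
  Δ_rsmul : ∀ (n m n' m' : ℕ) (s : Rᵐᵒᵖ) (x : C (n + n') (m + m')),
    Δ n m n' m' (s • x) = s • Δ n m n' m' x
  ε : C 0 0 ≃+ R
  ε_lsmul : ∀ (r : R) (x : C 0 0), ε (r • x) = r * ε x
  ε_rsmul : ∀ (s : Rᵐᵒᵖ) (x : C 0 0), ε (s • x) = ε x * s.unop
  connected : ∀ m : ℕ, Subsingleton (C 0 (m + 1))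
  counit_right : ∀ (n m : ℕ) (x : C (n + 0) (m + 0)),
    rcollapse ε.toAddMonoidHom ε_lsmul (Δ n m 0 0 x) = x
  counit_left : ∀ (n m : ℕ) (x : C (0 + n) (0 + m)),
    lcollapse ε.toAddMonoidHom ε_rsmul (Δ 0 0 n m x)
      = fcast (fun b => C n b) (Nat.zero_add m)
          (fcast (fun a => C a (0 + m)) (Nat.zero_add n) x)
  coassoc : ∀ (n m n' m' n'' m'' : ℕ) (x : C (n + n' + n'') (m + m' + m'')),
    assocT (mapT (Δ n m n' m') (AddMonoidHom.id (C n'' m''))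
        (fun s y => Δ_rsmul n m n' m' (op s) y) (fun _ _ => rfl)
      (Δ (n + n') (m + m') n'' m'' x))
    = mapT (AddMonoidHom.id (C n m)) (Δ n' m' n'' m'') (fun _ _ => rfl)
        (fun s y => Δ_lsmul n' m' n'' m'' s y)
      (Δ n m (n' + n'') (m' + m'')
        (fcast (fun b => C (n + (n' + n'')) b) (Nat.add_assoc m m' m'')
          (fcast (fun a => C a (m + m' + m'')) (Nat.add_assoc n n' n'') x)))

attribute [instance] BigrCoring.acg BigrCoring.modL BigrCoring.modR BigrCoring.scomm

variable {R} (C : BigrCoring R)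

/-- The degree-`n` component `⊕ₘ C_{n,m}` of the graded coring `gr(C)`
associated with a bigraded coring. -/
def grC (n : ℕ) : Type := ⨁ m, C.C n m

instance (n : ℕ) : AddCommGroup (grC C n) := inferInstanceAs (AddCommGroup (⨁ m, C.C n m))
instance (n : ℕ) : Module R (grC C n) := inferInstanceAs (Module R (⨁ m, C.C n m))
instance (n : ℕ) : Module Rᵐᵒᵖ (grC C n) := inferInstanceAs (Module Rᵐᵒᵖ (⨁ m, C.C n m))

/-- The components of the comultiplication of the graded coring `gr(C)`. -/
def grDelta (p q : ℕ) : grC C (p + q) →+ TensorR R (grC C p) (grC C q) :=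
  DirectSum.toAddMonoid fun M =>
    ∑ x ∈ (Finset.range (M + 1)).attach,
      (mapT (M' := grC C p) (N' := grC C q) (DirectSum.of (fun m => C.C p m) x.1)
          (DirectSum.of (fun m => C.C q m) (M - x.1))
          (fun s z => by
            classical
            exact (DFinsupp.single_smul (op s) z).symm ▸ rfl)
          (fun r z => by
            classical
            exact (DFinsupp.single_smul r z).symm ▸ rfl)).comp
        ((C.Δ p x.1 q (M - x.1)).comp
          (fcast (C.C (p + q)) (show M = x.1 + (M - x.1) by
            have := Finset.mem_range.mp x.2
            omega)).toAddMonoidHom)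

end BigradedCorings
--CHUNK_BC_END

/-! Induction on `n ≥ 1`. The comultiplication component `Δ_{n,1}` of `gr(C)` sends
`C_{n+1,m}` into `⊕ₐ C_{n,a} ⊗ C_{1,m-a}`; by induction only `a = n` can contribute, and
`C_{1,m-n} = 0` unless `m = n + 1`. As `Δ_{n,1}` is injective, `C_{n+1,m} = 0` for `m ≠ n + 1`. -/

section Vanishing

variable {R : Type} [Ring R]

instance TensorR.subsingleton_left {M N : Type} [AddCommGroup M] [AddCommGroup N]
    [Module Rᵐᵒᵖ M] [Module R N] [Subsingleton M] : Subsingleton (TensorR R M N) :=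
  subsingleton_of_forall_eq 0 fun z => by
    induction z using TensorR.ind with
    | h0 => rfl
    | htp m n => rw [Subsingleton.elim m 0, tp_zero_left]
    | hadd x y hx hy => rw [hx, hy, add_zero]

instance TensorR.subsingleton_right {M N : Type} [AddCommGroup M] [AddCommGroup N]
    [Module Rᵐᵒᵖ M] [Module R N] [Subsingleton N] : Subsingleton (TensorR R M N) :=
  subsingleton_of_forall_eq 0 fun z => by
    induction z using TensorR.ind with
    | h0 => rfl
    | htp m n => rw [Subsingleton.elim n 0, tp_zero_right]
    | hadd x y hx hy => rw [hx, hy, add_zero]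

variable (C : BigrCoring R)

theorem BigrCoring.subsingleton_of_grDelta_injective {p q : ℕ}
    (hinj : Function.Injective (grDelta C p q)) (M : ℕ)
    (hpieces : ∀ a ≤ M, Subsingleton (C.C p a) ∨ Subsingleton (C.C q (M - a))) :
    Subsingleton (C.C (p + q) M) := by
  refine subsingleton_of_forall_eq 0 fun x => ?_
  have hΔ : grDelta C p q (DirectSum.of (fun m => C.C (p + q) m) M x) = 0 := by
    unfold grDelta
    erw [DirectSum.toAddMonoid_of, AddMonoidHom.finsetSum_apply]
    refine Finset.sum_eq_zero fun ⟨a, ha⟩ _ => ?_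
    have hpiece : ∀ z : TensorR R (C.C p a) (C.C q (M - a)), z = 0 := by
      rcases hpieces a (Nat.lt_succ_iff.mp (Finset.mem_range.mp ha)) with h | h <;>
        exact fun z => Subsingleton.elim z 0
    simp only [AddMonoidHom.comp_apply, hpiece, map_zero]
  have hof : DirectSum.of (fun m => C.C (p + q) m) M x = 0 :=
    hinj (hΔ.trans (map_zero (grDelta C p q)).symm)
  have hM := DFunLike.congr_fun hof M
  rwa [DirectSum.of_eq_same, DirectSum.zero_apply] at hM

theorem BigrCoring.subsingleton_of_ne_of_one_le
    (hinj : ∀ n : ℕ, Function.Injective (grDelta C n 1))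
    (h1 : ∀ m : ℕ, m ≠ 1 → Subsingleton (C.C 1 m)) {n : ℕ} (hn : 1 ≤ n) :
    ∀ m : ℕ, m ≠ n → Subsingleton (C.C n m) := by
  induction n, hn using Nat.le_induction with
  | base => exact h1
  | succ n _ ih =>
    intro M hM
    refine C.subsingleton_of_grDelta_injective (hinj n) M fun a _ => ?_
    rcases eq_or_ne a n with rfl | ha
    · exact .inr (h1 _ (by omega))
    · exact .inl (ih a ha)

end Vanishing

theorem bigraded_coring_diagonal_general
    (R : Type) [Ring R] (C : BigrCoring R)
    (hsg : ∀ p q : ℕ, Function.Injective (grDelta C p q))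
    (h1 : ∀ m : ℕ, m ≠ 1 → Subsingleton (C.C 1 m)) :
    ∀ n m : ℕ, 2 ≤ n → m ≠ n → Subsingleton (C.C n m) :=
  fun _ m hn hm => C.subsingleton_of_ne_of_one_le (hsg · 1) h1 (by omega) m hm

/-- Let `R` be a semisimple ring and `C = ⊕_{n,m} C_{n,m}` a
connected bigraded `R`-coring such that the associated graded coring `gr(C)`
(whose degree-`n` component is `⊕ₘ C_{n,m}`) is strongly graded, and such that
`C_{n,m} = 0` whenever `n ∈ {0, 1}` and `m ≠ n`.  Then `C_{n,m} = 0` for all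
`n ≥ 2` and all `m ≠ n`. -/
theorem bigraded_coring_diagonal
    (R : Type) [Ring R] (hR : IsSemisimpleRing R) (C : BigrCoring R)
    (hsg : ∀ p q : ℕ, Function.Injective (grDelta C p q))
    (h0 : ∀ m : ℕ, m ≠ 0 → Subsingleton (C.C 0 m))
    (h1 : ∀ m : ℕ, m ≠ 1 → Subsingleton (C.C 1 m)) :
    ∀ n m : ℕ, 2 ≤ n → m ≠ n → Subsingleton (C.C n m) :=
  bigraded_coring_diagonal_general R C hsg h1

end P1605
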